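/- arXiv:1708.00209 — 2 statements merged into one kernel-verified Lean document; each statement's English description precedes it below -/
import Mathlib

section
/- Let g be a finite-dimensional real Lie algebra, let r : g* → g be a bijective skew-symmetric solution of the CYBE, and let r', r'' : g* → g be skew-symmetric solutions of the CYBE such that r + r' and r + r'' are solutions of the CYBE. Set n' := r' ∘ r⁻¹ and n'' := r'' ∘ r⁻¹. Then the Nijenhuis concomitant of n' and n'' vanishes identically if and only if r' + r'' is a solution of the CYBE. -/
noncomputable section

open Module

variable {g : Type*} [LieRing g] [LieAlgebra ℝ g]

/-- The coadjoint operator: `(coad X α) Y = -α ⁅X, Y⁆`. -/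
def coad (X : g) : Module.Dual ℝ g →ₗ[ℝ] Module.Dual ℝ g :=
  -(LieAlgebra.ad ℝ g X).dualMap

/-- A linear map `r : g* → g` is skew-symmetric if `α (r β) = -β (r α)`. -/
def IsSkew (r : Module.Dual ℝ g →ₗ[ℝ] g) : Prop :=
  ∀ α β : Module.Dual ℝ g, α (r β) = -β (r α)

/-- The Sklyanin bracket on `g*` defined by `r`. -/
def sklyanin (r : Module.Dual ℝ g →ₗ[ℝ] g) (α β : Module.Dual ℝ g) : Module.Dual ℝ g :=
  coad (r α) β - coad (r β) α

/-- `r` is a solution of the classical Yang-Baxter equation. -/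
def IsCYBE (r : Module.Dual ℝ g →ₗ[ℝ] g) : Prop :=
  ∀ α β : Module.Dual ℝ g, r (sklyanin r α β) = ⁅r α, r β⁆

/-- `n : g → g` is a Nijenhuis operator. -/
def IsNijenhuis (n : g →ₗ[ℝ] g) : Prop :=
  ∀ X Y : g, ⁅n X, n Y⁆ - n ⁅n X, Y⁆ - n ⁅X, n Y⁆ + n (n ⁅X, Y⁆) = 0

/-- `(r, n)` is an r-n structure on `g`. -/
def IsRN (r : Module.Dual ℝ g →ₗ[ℝ] g) (n : g →ₗ[ℝ] g) : Prop :=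
  IsSkew r ∧ IsCYBE r ∧ IsNijenhuis n ∧
    (∀ α : Module.Dual ℝ g, n (r α) = r (n.dualMap α)) ∧
    ∀ α β : Module.Dual ℝ g,
      coad (r α) (n.dualMap β) - coad (r β) (n.dualMap α)
        - n.dualMap (coad (r α) β) + n.dualMap (coad (r β) α) = 0

/-- The Nijenhuis concomitant of two endomorphisms. -/
def nijConcomitant (n' n : g →ₗ[ℝ] g) (X Y : g) : g :=
  ⁅n' X, n Y⁆ + ⁅n X, n' Y⁆ - n' ⁅n X, Y⁆ - n' ⁅X, n Y⁆ - n ⁅n' X, Y⁆ - n ⁅X, n' Y⁆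
    + n' (n ⁅X, Y⁆) + n (n' ⁅X, Y⁆)

lemma sklyanin_add' (r s : Module.Dual ℝ g →ₗ[ℝ] g) (α β : Module.Dual ℝ g) :
    sklyanin (r + s) α β = sklyanin r α β + sklyanin s α β := by
  ext γ
  simp [sklyanin, coad, LieAlgebra.ad_apply, add_lie]
  abel

lemma mixed_iff (r s : Module.Dual ℝ g →ₗ[ℝ] g) (hr : IsCYBE r) (hs : IsCYBE s) :
    IsCYBE (r + s) ↔
      ∀ α β : Module.Dual ℝ g,
        r (sklyanin s α β) + s (sklyanin r α β) = ⁅r α, s β⁆ + ⁅s α, r β⁆ := by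
  have key : ∀ α β : Module.Dual ℝ g,
      (r + s) (sklyanin (r + s) α β) - ⁅(r + s) α, (r + s) β⁆
        = (r (sklyanin s α β) + s (sklyanin r α β)) - (⁅r α, s β⁆ + ⁅s α, r β⁆) := by
    intro α β
    rw [sklyanin_add']
    simp only [LinearMap.add_apply, map_add, add_lie, lie_add, hr α β, hs α β]
    abel
  constructor
  · intro h α β
    have := key α β
    rw [h α β, sub_self] at this
    exact (sub_eq_zero.mp this.symm)
  · intro h α β
    have := key α β
    rw [h α β, sub_self] at this
    exact sub_eq_zero.mp this

/-- With `r` a bijective skew-symmetric solution of the CYBE and `r', r''`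
skew-symmetric solutions such that `r + r'` and `r + r''` are solutions, setting
`n' := r' ∘ r⁻¹` and `n'' := r'' ∘ r⁻¹`, the Nijenhuis concomitant of `n'` and `n''`
vanishes identically iff `r' + r''` is a solution of the CYBE. -/
theorem nijConcomitant_eq_zero_iff_sum_isCYBE
    {g : Type*} [LieRing g] [LieAlgebra ℝ g] [FiniteDimensional ℝ g]
    (r r' r'' : Module.Dual ℝ g →ₗ[ℝ] g)
    (hskew : IsSkew r) (hcybe : IsCYBE r)
    (hskew' : IsSkew r') (hcybe' : IsCYBE r')
    (hskew'' : IsSkew r'') (hcybe'' : IsCYBE r'')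
    (hsum' : IsCYBE (r + r')) (hsum'' : IsCYBE (r + r''))
    (rinv : g →ₗ[ℝ] Module.Dual ℝ g)
    (hrinv₁ : ∀ X : g, r (rinv X) = X) (hrinv₂ : ∀ α : Module.Dual ℝ g, rinv (r α) = α) :
    (∀ X Y : g, nijConcomitant (r' ∘ₗ rinv) (r'' ∘ₗ rinv) X Y = 0) ↔ IsCYBE (r' + r'') := by
  have m' := (mixed_iff r r' hcybe hcybe').mp hsum'
  have m'' := (mixed_iff r r'' hcybe hcybe'').mp hsum''
  have key : ∀ α β : Module.Dual ℝ g,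
      nijConcomitant (r' ∘ₗ rinv) (r'' ∘ₗ rinv) (r α) (r β)
        = ⁅r' α, r'' β⁆ + ⁅r'' α, r' β⁆
            - (r' (sklyanin r'' α β) + r'' (sklyanin r' α β)) := by
    intro α β
    have e1 : ⁅r'' α, r β⁆
        = r (sklyanin r'' α β) + r'' (sklyanin r α β) - ⁅r α, r'' β⁆ := by
      rw [eq_sub_iff_add_eq, add_comm, ← m'' α β]
    have e2 : ⁅r' α, r β⁆
        = r (sklyanin r' α β) + r' (sklyanin r α β) - ⁅r α, r' β⁆ := by
      rw [eq_sub_iff_add_eq, add_comm, ← m' α β]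
    have e3 : ⁅r α, r β⁆ = r (sklyanin r α β) := (hcybe α β).symm
    simp only [nijConcomitant, LinearMap.comp_apply, hrinv₂]
    rw [e1, e2, e3]
    simp only [map_add, map_sub, hrinv₂]
    abel
  constructor
  · intro h
    refine (mixed_iff r' r'' hcybe' hcybe'').mpr ?_
    intro α β
    have := key α β
    rw [h (r α) (r β)] at this
    have := sub_eq_zero.mp this.symm
    linear_combination (norm := abel) this.symm
  · intro h X Y
    have hm := (mixed_iff r' r'' hcybe' hcybe'').mp h
    have := key (rinv X) (rinv Y)
    rw [hrinv₁, hrinv₁, hm (rinv X) (rinv Y), sub_self] at this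
    exact this
end
end

section
/- Let g be a finite-dimensional real Lie algebra and let (r, n) be an r-n structure on g. Then for every natural number k, the map n^k ∘ r : g* → g is skew-symmetric and is a solution of the CYBE. -/
/-!
If `(r, n)` is an r-n structure then so is `(n ∘ r, n)`, and the theorem follows by induction
on `k`. Skewness of `n ∘ r` and `n ∘ (n ∘ r) = (n ∘ r) ∘ nᵗ` follow from `n ∘ r = r ∘ nᵗ`.
Writing `D_Z = ⁅ad Z, n⁆`, the concomitant of `r` and `n` vanishes iff
`β (D_{r α} X) = α (D_{r β} X)`, and `n` is Nijenhuis iff `n ∘ D_Z = D_{n Z}`; together these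
give the vanishing of the concomitant of `n ∘ r` and `n`. The vanishing concomitant also makes
the Sklyanin bracket of `n ∘ r` the deformation `[nᵗα, β]ʳ + [α, nᵗβ]ʳ - nᵗ[α, β]ʳ` of that
of `r`, so the CYBE for `n ∘ r` reduces to the CYBE for `r` and the Nijenhuis identity.
-/

noncomputable section

open Module

variable {g : Type*} [LieRing g] [LieAlgebra ℝ g]

lemma coad_apply (X : g) (β : Module.Dual ℝ g) (Y : g) : coad X β Y = -β ⁅X, Y⁆ := rfl

def ConcomitantVanishes (r : Module.Dual ℝ g →ₗ[ℝ] g) (n : g →ₗ[ℝ] g) : Prop :=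
  ∀ α β : Module.Dual ℝ g,
    coad (r α) (n.dualMap β) - coad (r β) (n.dualMap α)
      - n.dualMap (coad (r α) β) + n.dualMap (coad (r β) α) = 0

section

open LieAlgebra

variable {r : Module.Dual ℝ g →ₗ[ℝ] g} {n : g →ₗ[ℝ] g}

lemma lie_ad_apply (Z X : g) : ⁅ad ℝ g Z, n⁆ X = ⁅Z, n X⁆ - n ⁅Z, X⁆ := by
  simp [Ring.lie_def]

lemma IsNijenhuis.apply_lie_ad (hn : IsNijenhuis n) (Z X : g) :
    n (⁅ad ℝ g Z, n⁆ X) = ⁅ad ℝ g (n Z), n⁆ X := by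
  rw [lie_ad_apply, lie_ad_apply, map_sub]
  linear_combination (norm := module) -hn Z X

lemma concomitantVanishes_iff : ConcomitantVanishes r n ↔
    ∀ (α β : Module.Dual ℝ g) (X : g),
      β (⁅ad ℝ g (r α), n⁆ X) = α (⁅ad ℝ g (r β), n⁆ X) := by
  refine forall₂_congr fun α β => ?_
  rw [LinearMap.ext_iff]
  refine forall_congr' fun X => ?_
  simp only [LinearMap.sub_apply, LinearMap.add_apply, LinearMap.zero_apply, coad_apply,
    LinearMap.dualMap_apply, lie_ad_apply, map_sub]
  constructor <;> intro h <;> linarith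

lemma IsSkew.comp (hr : IsSkew r) (hnr : ∀ α, n (r α) = r (n.dualMap α)) :
    IsSkew (n ∘ₗ r) := by
  intro α β
  rw [LinearMap.comp_apply, LinearMap.comp_apply, hnr, hr, LinearMap.dualMap_apply]

lemma sklyanin_comp (hnr : ∀ α, n (r α) = r (n.dualMap α)) (hc : ConcomitantVanishes r n)
    (α β : Module.Dual ℝ g) :
    sklyanin (n ∘ₗ r) α β = sklyanin r (n.dualMap α) β + sklyanin r α (n.dualMap β)
      - n.dualMap (sklyanin r α β) := by
  simp only [sklyanin, LinearMap.comp_apply, hnr, map_sub]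
  rw [eq_comm, ← sub_eq_zero, ← hc α β]
  abel

lemma IsCYBE.comp (hr : IsCYBE r) (hn : IsNijenhuis n) (hnr : ∀ α, n (r α) = r (n.dualMap α))
    (hc : ConcomitantVanishes r n) : IsCYBE (n ∘ₗ r) := by
  intro α β
  calc (n ∘ₗ r) (sklyanin (n ∘ₗ r) α β)
      = n (r (sklyanin r (n.dualMap α) β) + r (sklyanin r α (n.dualMap β))
          - n (r (sklyanin r α β))) := by
        rw [LinearMap.comp_apply, sklyanin_comp hnr hc, map_sub, map_add, hnr]
    _ = n (⁅n (r α), r β⁆ + ⁅r α, n (r β)⁆ - n ⁅r α, r β⁆) := by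
        rw [hr, hr, hr, hnr, hnr]
    _ = ⁅(n ∘ₗ r) α, (n ∘ₗ r) β⁆ := by
        rw [map_sub, map_add, LinearMap.comp_apply, LinearMap.comp_apply]
        linear_combination (norm := module) -hn (r α) (r β)

lemma ConcomitantVanishes.comp (hc : ConcomitantVanishes r n) (hn : IsNijenhuis n)
    (hnr : ∀ α, n (r α) = r (n.dualMap α)) : ConcomitantVanishes (n ∘ₗ r) n := by
  rw [concomitantVanishes_iff] at hc ⊢
  intro α β X
  calc β (⁅ad ℝ g (n (r α)), n⁆ X)
      = n.dualMap β (⁅ad ℝ g (r α), n⁆ X) := by rw [← hn.apply_lie_ad]; rfl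
    _ = α (⁅ad ℝ g (r (n.dualMap β)), n⁆ X) := hc α _ X
    _ = α (⁅ad ℝ g (n (r β)), n⁆ X) := by rw [hnr]

lemma IsRN.comp (h : IsRN r n) : IsRN (n ∘ₗ r) n := by
  obtain ⟨hskew, hcybe, hn, hnr, hc⟩ := h
  exact ⟨hskew.comp hnr, hcybe.comp hn hnr hc, hn,
    fun α => by rw [LinearMap.comp_apply, hnr]; rfl, ConcomitantVanishes.comp hc hn hnr⟩

lemma IsRN.pow_comp (h : IsRN r n) (k : ℕ) : IsRN ((n ^ k) ∘ₗ r) n := by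
  induction k with
  | zero => simpa [Module.End.one_eq_id] using h
  | succ k ih => simpa only [pow_succ', Module.End.mul_eq_comp, LinearMap.comp_assoc] using ih.comp

end

theorem isSkew_and_isCYBE_pow_comp_general
    {g : Type*} [LieRing g] [LieAlgebra ℝ g]
    (r : Module.Dual ℝ g →ₗ[ℝ] g) (n : g →ₗ[ℝ] g) (h : IsRN r n) :
    ∀ k : ℕ, IsSkew ((n ^ k) ∘ₗ r) ∧ IsCYBE ((n ^ k) ∘ₗ r) :=
  fun k => ⟨(h.pow_comp k).1, (h.pow_comp k).2.1⟩

/-- If `(r, n)` is an r-n structure on `g`, then for every natural number `k`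
the map `n^k ∘ r : g* → g` is skew-symmetric and a solution of the CYBE. -/
theorem isSkew_and_isCYBE_pow_comp
    {g : Type*} [LieRing g] [LieAlgebra ℝ g] [FiniteDimensional ℝ g]
    (r : Module.Dual ℝ g →ₗ[ℝ] g) (n : g →ₗ[ℝ] g) (h : IsRN r n) :
    ∀ k : ℕ, IsSkew ((n ^ k) ∘ₗ r) ∧ IsCYBE ((n ^ k) ∘ₗ r) :=
  isSkew_and_isCYBE_pow_comp_general r n h
end
end
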